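/- Let D = |ξ|⁴ − |ξ|²⟨ξ,η⟩ + ½|ξ|²|η|² − ½⟨ξ,η⟩² − |ξ|³|ξ−η|. Then D = ½(|ξ||ξ−η| + ⟨ξ,η⟩ − |ξ|²)(|ξ|(|ξ−η|−|ξ|) − ⟨ξ,η⟩), and consequently |D| ≤ ½|ξ||η|³ for all ξ, η ∈ ℝ³. -/

import Mathlib

/-!
Write `a = ‖ξ‖`, `b = ‖ξ - η‖`, `n = ‖η‖`, `t = ⟪ξ, η⟫`. The law of cosines `b² = a² - 2t + n²`
turns the identity into a polynomial identity. It also shows that the first factor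
`ab + t - a²` equals `(n² - (b - a)²) / 2`, which lies in `[0, n²/2]` because `|b - a| ≤ n`,
while the second factor `a(b - a) - t` is at most `2an` in absolute value by Cauchy–Schwarz.
-/

section LawOfCosines

variable {a b n t : ℝ}

theorem quartic_eq_half_mul (hb : b ^ 2 = a ^ 2 - 2 * t + n ^ 2) :
    a ^ 4 - a ^ 2 * t + a ^ 2 * n ^ 2 / 2 - t ^ 2 / 2 - a ^ 3 * b =
      1 / 2 * (a * b + t - a ^ 2) * (a * (b - a) - t) := by
  linear_combination (-(a ^ 2) / 2) * hb

theorem two_mul_add_sub_eq (hb : b ^ 2 = a ^ 2 - 2 * t + n ^ 2) :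
    2 * (a * b + t - a ^ 2) = n ^ 2 - (b - a) ^ 2 := by
  linear_combination hb

theorem abs_half_mul_le (hb : b ^ 2 = a ^ 2 - 2 * t + n ^ 2) (ha : 0 ≤ a)
    (ht : |t| ≤ a * n) (hba : |b - a| ≤ n) :
    |1 / 2 * (a * b + t - a ^ 2) * (a * (b - a) - t)| ≤ a * n ^ 3 / 2 := by
  have hfirst : |a * b + t - a ^ 2| ≤ n ^ 2 / 2 := by
    have hsq : (b - a) ^ 2 ≤ n ^ 2 := sq_le_sq' (abs_le.mp hba).1 (abs_le.mp hba).2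
    have := two_mul_add_sub_eq hb
    rw [abs_le]
    constructor <;> nlinarith [sq_nonneg (b - a)]
  have hsecond : |a * (b - a) - t| ≤ 2 * a * n :=
    calc |a * (b - a) - t| ≤ |a * (b - a)| + |t| := abs_sub _ _
      _ = a * |b - a| + |t| := by rw [abs_mul, abs_of_nonneg ha]
      _ ≤ a * n + a * n := by gcongr
      _ = 2 * a * n := by ring
  calc |1 / 2 * (a * b + t - a ^ 2) * (a * (b - a) - t)|
      = 1 / 2 * |a * b + t - a ^ 2| * |a * (b - a) - t| := by
        rw [abs_mul, abs_mul, abs_of_pos (by norm_num : (0 : ℝ) < 1 / 2)]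
    _ ≤ 1 / 2 * (n ^ 2 / 2) * (2 * a * n) := by gcongr
    _ = a * n ^ 3 / 2 := by ring

end LawOfCosines

theorem stmt3 (ξ η : EuclideanSpace ℝ (Fin 3)) :
    ‖ξ‖ ^ 4 - ‖ξ‖ ^ 2 * (inner ℝ ξ η : ℝ) + ‖ξ‖ ^ 2 * ‖η‖ ^ 2 / 2
        - (inner ℝ ξ η : ℝ) ^ 2 / 2 - ‖ξ‖ ^ 3 * ‖ξ - η‖ =
      (1 / 2) * (‖ξ‖ * ‖ξ - η‖ + (inner ℝ ξ η : ℝ) - ‖ξ‖ ^ 2)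
        * (‖ξ‖ * (‖ξ - η‖ - ‖ξ‖) - (inner ℝ ξ η : ℝ)) ∧
    |‖ξ‖ ^ 4 - ‖ξ‖ ^ 2 * (inner ℝ ξ η : ℝ) + ‖ξ‖ ^ 2 * ‖η‖ ^ 2 / 2
        - (inner ℝ ξ η : ℝ) ^ 2 / 2 - ‖ξ‖ ^ 3 * ‖ξ - η‖| ≤ ‖ξ‖ * ‖η‖ ^ 3 / 2 := by
  have hcos : ‖ξ - η‖ ^ 2 = ‖ξ‖ ^ 2 - 2 * inner ℝ ξ η + ‖η‖ ^ 2 := norm_sub_sq_real ξ η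
  have htriangle : |‖ξ - η‖ - ‖ξ‖| ≤ ‖η‖ := by
    simpa using abs_norm_sub_norm_le (ξ - η) ξ
  rw [quartic_eq_half_mul hcos]
  exact ⟨rfl, abs_half_mul_le hcos (norm_nonneg ξ) (abs_real_inner_le_norm ξ η) htriangle⟩
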